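/- arXiv:1702.01675 — 7 statements merged into one kernel-verified Lean document; each statement's English description precedes it below -/
import Mathlib

section
/- For all p ∈ (0, e^{-2}], we have p - (1-p)·log_p(1-p) ≥ p/2. -/
/-!
Write `K(p) = p + a / L` with `a = (1 - p) log (1 - p)` and `L = log p < 0`.
The tangent-line bound `1 - 1/y ≤ log y` at `y = 1 - p` gives `a ≥ -p`, hence
`K(p) ≥ p + p / log p`, and `log p ≤ -2` turns this into `K(p) ≥ p / 2`.
-/

open Real

lemma neg_le_one_sub_mul_log_one_sub {x : ℝ} (hx : x < 1) :
    -x ≤ (1 - x) * log (1 - x) := by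
  have hpos : 0 < 1 - x := sub_pos.2 hx
  calc -x = (1 - x) * (1 - (1 - x)⁻¹) := by field_simp; ring
    _ ≤ (1 - x) * log (1 - x) :=
      mul_le_mul_of_nonneg_left (one_sub_inv_le_log_of_pos hpos) hpos.le

lemma add_div_log_le_sub_mul_log_div_log {p : ℝ} (hp : 0 < p) (hp1 : p < 1) :
    p + p / log p ≤ p - (1 - p) * (log (1 - p) / log p) := by
  have hlog : log p ≤ 0 := (log_neg hp hp1).le
  have key : (1 - p) * log (1 - p) / log p ≤ -p / log p :=
    div_le_div_of_nonpos_of_le hlog (neg_le_one_sub_mul_log_one_sub hp1)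
  rw [mul_div_assoc, neg_div] at key
  linarith

lemma neg_half_le_div_log {p : ℝ} (hp : 0 ≤ p) (hlog : log p ≤ -2) :
    -(p / 2) ≤ p / log p := by
  have h : p / -log p ≤ p / 2 := div_le_div_of_nonneg_left hp two_pos (by linarith)
  rw [div_neg] at h
  linarith

theorem K_ge_half_p (p : ℝ) (hp : 0 < p) (hp2 : p ≤ Real.exp (-2)) :
    p - (1 - p) * (Real.log (1 - p) / Real.log p) ≥ p / 2 := by
  have hp1 : p < 1 := hp2.trans_lt (exp_lt_one_iff.2 (by norm_num))
  have hlog : log p ≤ -2 := by simpa using log_le_log hp hp2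
  have := add_div_log_le_sub_mul_log_div_log hp hp1
  have := neg_half_le_div_log hp.le hlog
  linarith
end

section
/- Let p ∈ (0,1) and define F(x,y) = p·x·log_p(x) + (1-p)·y·log_p(y) + p·x - p·y and G(x,y) = (p·x + (1-p)·y)·log_p(p·x + (1-p)·y) for x, y ∈ [0,1], with the convention 0·log_p(0) = 0. Then for all x ≥ y ≥ 0 (with x, y ≤ 1), F(x,y) ≥ G(x,y). -/
/-! Multiplying by `log p < 0` turns the claim into
`p x log x + (1-p) y log y + p (x-y) log p ≤ s log s` with `s = p x + (1-p) y`.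
Split `s log s = p x log s + (1-p) y log s`. Since `s = ((x-y)/x)·(p x) + (y/x)·x`,
concavity of `log` gives `x log s ≥ x log x + (x-y) log p`; and `y ≤ s` gives
`y log s ≥ y log y`. -/

open Real

lemma sub_mul_log_le_mul_log_sub_log {p x y : ℝ} (hp : 0 < p) (hy : 0 ≤ y) (hxy : y ≤ x) :
    (x - y) * log p ≤ x * (log (p * x + (1 - p) * y) - log x) := by
  rcases (hy.trans hxy).eq_or_lt with rfl | hx
  · simp [le_antisymm hxy hy]
  have hconc := strictConcaveOn_log_Ioi.concaveOn.2 (Set.mem_Ioi.mpr (mul_pos hp hx))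
    (Set.mem_Ioi.mpr hx) (div_nonneg (sub_nonneg.2 hxy) hx.le) (div_nonneg hy hx.le)
    (by field_simp; ring)
  have hcomb : (x - y) / x * (p * x) + y / x * x = p * x + (1 - p) * y := by
    field_simp; ring
  simp only [smul_eq_mul] at hconc
  rw [hcomb, log_mul hp.ne' hx.ne'] at hconc
  calc (x - y) * log p = x * ((x - y) / x * (log p + log x) + y / x * log x - log x) := by
        field_simp; ring
    _ ≤ x * (log (p * x + (1 - p) * y) - log x) := by gcongr

lemma mul_log_le_mul_log_of_le {y s : ℝ} (hy : 0 ≤ y) (hys : y ≤ s) :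
    y * log y ≤ y * log s := by
  rcases hy.eq_or_lt with rfl | hy
  · simp
  · exact mul_le_mul_of_nonneg_left (log_le_log hy hys) hy.le

lemma mul_log_add_mul_log_add_mul_log_le {p x y : ℝ} (hp : 0 < p) (hp1 : p ≤ 1)
    (hy : 0 ≤ y) (hxy : y ≤ x) :
    p * x * log x + (1 - p) * y * log y + p * (x - y) * log p ≤
      (p * x + (1 - p) * y) * log (p * x + (1 - p) * y) := by
  have hx_term := sub_mul_log_le_mul_log_sub_log hp hy hxy
  have hy_term := mul_log_le_mul_log_of_le hy (show y ≤ p * x + (1 - p) * y by nlinarith)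
  linarith [mul_le_mul_of_nonneg_left hx_term hp.le,
    mul_le_mul_of_nonneg_left hy_term (sub_nonneg.2 hp1)]

theorem F_ge_G_general (p : ℝ) (hp : 0 < p) (hp1 : p < 1)
    (F G : ℝ → ℝ → ℝ)
    (hF : ∀ x y, F x y = p * x * (Real.log x / Real.log p)
      + (1 - p) * y * (Real.log y / Real.log p) + p * x - p * y)
    (hG : ∀ x y, G x y = (p * x + (1 - p) * y) *
      (Real.log (p * x + (1 - p) * y) / Real.log p))
    (x y : ℝ) (hy : 0 ≤ y) (hxy : y ≤ x) :
    F x y ≥ G x y := by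
  have hL : log p < 0 := log_neg hp hp1
  rw [hF, hG, ge_iff_le]
  calc (p * x + (1 - p) * y) * (log (p * x + (1 - p) * y) / log p)
      = (p * x + (1 - p) * y) * log (p * x + (1 - p) * y) / log p := by ring
    _ ≤ (p * x * log x + (1 - p) * y * log y + p * (x - y) * log p) / log p :=
        div_le_div_of_nonpos_of_le hL.le (mul_log_add_mul_log_add_mul_log_le hp hp1.le hy hxy)
    _ = p * x * (log x / log p) + (1 - p) * y * (log y / log p) + p * x - p * y := by
        field_simp [hL.ne]
        ring

theorem F_ge_G (p : ℝ) (hp : 0 < p) (hp1 : p < 1)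
    (F G : ℝ → ℝ → ℝ)
    (hF : ∀ x y, F x y = p * x * (Real.log x / Real.log p)
      + (1 - p) * y * (Real.log y / Real.log p) + p * x - p * y)
    (hG : ∀ x y, G x y = (p * x + (1 - p) * y) *
      (Real.log (p * x + (1 - p) * y) / Real.log p))
    (x y : ℝ) (hy : 0 ≤ y) (hxy : y ≤ x) (hx1 : x ≤ 1) :
    F x y ≥ G x y :=
  F_ge_G_general p hp hp1 F G hF hG x y hy hxy
end

section
/- Let p ∈ (0, 1/2] and define H(x,y) = p·x·log_p(x) + (1-p)·y·log_p(y) + p·y - p·x and G(x,y) = (p·x + (1-p)·y)·log_p(p·x + (1-p)·y) for x, y ∈ [0,1], with the convention 0·log_p(0) = 0. Then for all y ≥ x ≥ 0 (with x, y ≤ 1), H(x,y) ≥ G(x,y). -/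
/-!
Multiplying by `log p < 0`, the claim becomes
`p x log x + (1-p) y log y + p (y-x) log p ≤ m log m` with `m = p x + (1-p) y`.
For fixed `y`, the map `z ↦ (p z + c) log (p z + c) - p z log z` (with `c = (1-p) y`) is concave
on `[0, ∞)`, its derivative being `p log (p + c / z)`. Interpolating between `z = 0` and `z = y`
reduces the claim to `p log p ≤ (1-p) log (1-p)`, which holds for `p ≤ 1/2`.
-/

open Real Set

lemma mul_log_le_one_sub_mul_log_one_sub {p : ℝ} (hp : 0 < p) (hp2 : p ≤ 1 / 2) :
    p * log p ≤ (1 - p) * log (1 - p) := by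
  have hq : 0 < 1 - p := by linarith
  have h₁ := one_sub_inv_le_log_of_pos hq
  have h₂ := one_sub_inv_le_log_of_pos (div_pos hq hp)
  rw [log_div hq.ne' hp.ne', inv_div] at h₂
  -- `(1-p) log (1-p) - p log p = (1-2p) log (1-p) + p log ((1-p)/p)`, and the two tangent-line
  -- bounds on these logarithms cancel exactly.
  have hsum : (1 - 2 * p) * (1 - (1 - p)⁻¹) + p * (1 - p / (1 - p)) = 0 := by
    field_simp; ring
  linarith [mul_le_mul_of_nonneg_left h₁ (by linarith : (0 : ℝ) ≤ 1 - 2 * p),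
    mul_le_mul_of_nonneg_left h₂ hp.le]

lemma concaveOn_mul_log_add_sub_mul_log {p c : ℝ} (hp : 0 < p) (hc : 0 ≤ c) :
    ConcaveOn ℝ (Ici 0) fun z => (p * z + c) * log (p * z + c) - p * (z * log z) := by
  have hderiv : ∀ z ∈ Ioi (0 : ℝ), HasDerivAt
      (fun z => (p * z + c) * log (p * z + c) - p * (z * log z))
      (p * (log (p * z + c) - log z)) z := by
    intro z hz
    have hpz : 0 < p * z + c := by have := mul_pos hp hz; linarith
    have hlin : HasDerivAt (fun w => p * w + c) p z := by
      simpa using ((hasDerivAt_id z).const_mul p).add_const c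
    have h := ((hasDerivAt_mul_log hpz.ne').comp z hlin).sub
      ((hasDerivAt_mul_log hz.ne').const_mul p)
    exact h.congr_deriv (by ring)
  refine AntitoneOn.concaveOn_of_deriv (convex_Ici 0) (by fun_prop) ?_ ?_ <;> rw [interior_Ici]
  · exact fun z hz => (hderiv z hz).differentiableAt.differentiableWithinAt
  intro a (ha : 0 < a) b (hb : 0 < b) hab
  rw [(hderiv a ha).deriv, (hderiv b hb).deriv]
  have hpa : 0 < p * a + c := by have := mul_pos hp ha; linarith
  have hpb : 0 < p * b + c := by have := mul_pos hp hb; linarith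
  rw [← log_div hpa.ne' ha.ne', ← log_div hpb.ne' hb.ne']
  refine mul_le_mul_of_nonneg_left (log_le_log (by positivity) ?_) hp.le
  rw [div_le_div_iff₀ hb ha]
  nlinarith

lemma mul_log_add_mul_log_le_mul_log_mix {p x y : ℝ} (hp : 0 < p) (hp2 : p ≤ 1 / 2)
    (hx : 0 ≤ x) (hxy : x ≤ y) :
    p * (x * log x) + (1 - p) * (y * log y) + p * (y - x) * log p ≤
      (p * x + (1 - p) * y) * log (p * x + (1 - p) * y) := by
  obtain rfl | hy := (hx.trans hxy).eq_or_lt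
  · obtain rfl : x = 0 := le_antisymm hxy hx
    simp
  have hq : 0 < 1 - p := by linarith
  have hconc := (concaveOn_mul_log_add_sub_mul_log hp (mul_pos hq hy).le).2
    (self_mem_Ici (a := 0)) hy.le (div_nonneg (sub_nonneg.2 hxy) hy.le) (div_nonneg hx hy.le)
    (by field_simp; ring)
  have hmix : (y - x) / y * 0 + x / y * y = x := by field_simp; ring
  have hf0 : (y - x) / y * ((p * 0 + (1 - p) * y) * log (p * 0 + (1 - p) * y) - p * (0 * log 0))
      = (y - x) * (1 - p) * (log (1 - p) + log y) := by
    simp only [mul_zero, zero_add, zero_mul, sub_zero]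
    rw [log_mul hq.ne' hy.ne']
    field_simp
  have hfy : x / y * ((p * y + (1 - p) * y) * log (p * y + (1 - p) * y) - p * (y * log y))
      = x * (1 - p) * log y := by
    rw [show p * y + (1 - p) * y = y by ring]
    field_simp
  simp only [smul_eq_mul, hmix] at hconc
  rw [hf0, hfy] at hconc
  linarith [mul_le_mul_of_nonneg_left (mul_log_le_one_sub_mul_log_one_sub hp hp2)
    (sub_nonneg.2 hxy)]

theorem H_ge_G_general (p : ℝ) (hp : 0 < p) (hp2 : p ≤ 1/2)
    (H G : ℝ → ℝ → ℝ)
    (hH : ∀ x y, H x y = p * x * (Real.log x / Real.log p)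
      + (1 - p) * y * (Real.log y / Real.log p) + p * y - p * x)
    (hG : ∀ x y, G x y = (p * x + (1 - p) * y) *
      (Real.log (p * x + (1 - p) * y) / Real.log p))
    (x y : ℝ) (hx : 0 ≤ x) (hxy : x ≤ y) :
    H x y ≥ G x y := by
  have hlogp : log p < 0 := log_neg hp (by linarith)
  have hH' : H x y = (p * (x * log x) + (1 - p) * (y * log y) + p * (y - x) * log p) / log p := by
    rw [hH]; field_simp [hlogp.ne]; ring
  rw [ge_iff_le, hH', hG, mul_div_assoc']
  exact div_le_div_of_nonpos_of_le hlogp.le (mul_log_add_mul_log_le_mul_log_mix hp hp2 hx hxy)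

theorem H_ge_G (p : ℝ) (hp : 0 < p) (hp2 : p ≤ 1/2)
    (H G : ℝ → ℝ → ℝ)
    (hH : ∀ x y, H x y = p * x * (Real.log x / Real.log p)
      + (1 - p) * y * (Real.log y / Real.log p) + p * y - p * x)
    (hG : ∀ x y, G x y = (p * x + (1 - p) * y) *
      (Real.log (p * x + (1 - p) * y) / Real.log p))
    (x y : ℝ) (hx : 0 ≤ x) (hxy : x ≤ y) (hy1 : y ≤ 1) :
    H x y ≥ G x y :=
  H_ge_G_general p hp hp2 H G hH hG x y hx hxy
end

section
/- Let p ∈ (0,1) and let F, G be as follows: F(x,y) = p·x·log_p(x) + (1-p)·y·log_p(y) + p·x - p·y and G(x,y) = (p·x + (1-p)·y)·log_p(p·x + (1-p)·y), with 0·log_p(0) = 0. Then for all 0 ≤ y ≤ x ≤ 1, F(x,y) - G(x,y) ≥ p·(x - y)·log_p( p·x / (p·x + (1-p)·y) ) (where the right-hand side is interpreted as 0 when x = 0). -/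
/-!
Write `s = p x + (1 - p) y`. Multiplying the difference of the two sides by `log p < 0` and
expanding `log (p x / s) = log p + log x - log s`, every term carrying `log p` cancels and what
remains is `y (p log x + (1 - p) log y) - y log s`, which is `≤ 0` by concavity of `log`.
-/

open Real

lemma mul_weighted_log_le_mul_log_weighted {p x y : ℝ} (hp0 : 0 ≤ p) (hp1 : p ≤ 1)
    (hx : 0 < x) (hy : 0 ≤ y) :
    y * (p * log x + (1 - p) * log y) ≤ y * log (p * x + (1 - p) * y) := by
  rcases hy.eq_or_lt with rfl | hy
  · simp
  · refine mul_le_mul_of_nonneg_left ?_ hy.le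
    exact strictConcaveOn_log_Ioi.concaveOn.2 (Set.mem_Ioi.2 hx) (Set.mem_Ioi.2 hy) hp0
      (sub_nonneg.2 hp1) (add_sub_cancel p 1)

lemma log_mul_F_sub_G_sub_rhs {p x y : ℝ} (hp : 0 < p) (hlogp : log p ≠ 0) (hx : 0 < x)
    (hs : 0 < p * x + (1 - p) * y) :
    log p * (p * x * (log x / log p) + (1 - p) * y * (log y / log p) + p * x - p * y
      - (p * x + (1 - p) * y) * (log (p * x + (1 - p) * y) / log p)
      - p * (x - y) * (log (p * x / (p * x + (1 - p) * y)) / log p))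
    = y * (p * log x + (1 - p) * log y) - y * log (p * x + (1 - p) * y) := by
  rw [log_div (mul_pos hp hx).ne' hs.ne', log_mul hp.ne' hx.ne']
  field_simp
  ring

theorem F_sub_G_lower_general (p : ℝ) (hp : 0 < p) (hp1 : p < 1)
    (F G : ℝ → ℝ → ℝ)
    (hF : ∀ x y, F x y = p * x * (Real.log x / Real.log p)
      + (1 - p) * y * (Real.log y / Real.log p) + p * x - p * y)
    (hG : ∀ x y, G x y = (p * x + (1 - p) * y) *
      (Real.log (p * x + (1 - p) * y) / Real.log p))
    (x y : ℝ) (hy : 0 ≤ y) (hxy : y ≤ x) :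
    F x y - G x y ≥ p * (x - y) *
      (Real.log (p * x / (p * x + (1 - p) * y)) / Real.log p) := by
  rw [hF, hG, ge_iff_le, ← sub_nonneg]
  rcases (hy.trans hxy).eq_or_lt with rfl | hx
  · obtain rfl : y = 0 := le_antisymm hxy hy
    simp
  · have hlogp : log p < 0 := log_neg hp hp1
    have hs : 0 < p * x + (1 - p) * y :=
      add_pos_of_pos_of_nonneg (mul_pos hp hx) (mul_nonneg (sub_nonneg.2 hp1.le) hy)
    refine nonneg_of_mul_nonpos_right ?_ hlogp
    rw [log_mul_F_sub_G_sub_rhs hp hlogp.ne hx hs]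
    linarith [mul_weighted_log_le_mul_log_weighted hp.le hp1.le hx hy]

theorem F_sub_G_lower (p : ℝ) (hp : 0 < p) (hp1 : p < 1)
    (F G : ℝ → ℝ → ℝ)
    (hF : ∀ x y, F x y = p * x * (Real.log x / Real.log p)
      + (1 - p) * y * (Real.log y / Real.log p) + p * x - p * y)
    (hG : ∀ x y, G x y = (p * x + (1 - p) * y) *
      (Real.log (p * x + (1 - p) * y) / Real.log p))
    (x y : ℝ) (hy : 0 ≤ y) (hxy : y ≤ x) (hx1 : x ≤ 1) :
    F x y - G x y ≥ p * (x - y) *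
      (Real.log (p * x / (p * x + (1 - p) * y)) / Real.log p) :=
  F_sub_G_lower_general p hp hp1 F G hF hG x y hy hxy
end

section
/- Let p ∈ (0, e^{-2}] and let H, G be as in the previous definition: H(x,y) = p·x·log_p(x) + (1-p)·y·log_p(y) + p·y - p·x and G(x,y) = (p·x + (1-p)·y)·log_p(p·x + (1-p)·y), with 0·log_p(0) = 0. Then for all 0 ≤ x ≤ y ≤ 1, H(x,y) - G(x,y) ≥ (p/2)·(y - x). -/
theorem H_sub_G_lower_small_p (p : ℝ) (hp : 0 < p) (hp2 : p ≤ Real.exp (-2))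
    (H G : ℝ → ℝ → ℝ)
    (hH : ∀ x y, H x y = p * x * (Real.log x / Real.log p)
      + (1 - p) * y * (Real.log y / Real.log p) + p * y - p * x)
    (hG : ∀ x y, G x y = (p * x + (1 - p) * y) *
      (Real.log (p * x + (1 - p) * y) / Real.log p))
    (x y : ℝ) (hx : 0 ≤ x) (hxy : x ≤ y) (hy1 : y ≤ 1) :
    H x y - G x y ≥ (p / 2) * (y - x) := by
  have hp1 : p < 1 := lt_of_le_of_lt hp2 (by
    have := Real.exp_lt_one_iff.mpr (by norm_num : (-2:ℝ) < 0)
    linarith)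
  have hL : Real.log p ≤ -2 := by
    have := Real.log_le_log hp hp2
    rwa [Real.log_exp] at this
  have hL0 : Real.log p < 0 := by linarith
  rw [hH, hG]
  rcases eq_or_lt_of_le (hx.trans hxy) with h0 | hy0
  · -- y = 0, hence x = 0
    have hy : y = 0 := h0.symm
    have hx0 : x = 0 := le_antisymm (hy ▸ hxy) hx
    simp [hx0, hy]
  · -- y > 0
    obtain ⟨m, hm⟩ : ∃ m, p * x + (1 - p) * y = m := ⟨_, rfl⟩
    rw [hm]
    have hm0 : 0 < m := by nlinarith
    have hxm : x ≤ m := by nlinarith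
    obtain ⟨D, hD⟩ : ∃ D, p * x * Real.log x + (1 - p) * y * Real.log y
        - m * Real.log m = D := ⟨_, rfl⟩
    have key : p * x * (Real.log x / Real.log p)
        + (1 - p) * y * (Real.log y / Real.log p) + p * y - p * x
        - m * (Real.log m / Real.log p) = D / Real.log p + p * (y - x) := by
      rw [← hD]
      field_simp
      ring
    rw [key]
    have hDle : D ≤ p * (y - x) := by
      have t1 : p * x * Real.log x ≤ p * x * Real.log m := by
        rcases eq_or_lt_of_le hx with h | h
        · simp [← h]
        · exact mul_le_mul_of_nonneg_left (Real.log_le_log h hxm) (by positivity)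
      have t2 : Real.log y - Real.log m ≤ y / m - 1 := by
        have h1 : Real.log (y / m) ≤ y / m - 1 :=
          Real.log_le_sub_one_of_pos (div_pos hy0 hm0)
        rwa [Real.log_div (ne_of_gt hy0) (ne_of_gt hm0)] at h1
      have t3 : (1 - p) * y * (Real.log y - Real.log m) ≤ (1 - p) * y * (y / m - 1) := by
        have hc : (0:ℝ) ≤ (1 - p) * y := by nlinarith
        exact mul_le_mul_of_nonneg_left t2 hc
      have t4 : (1 - p) * y * (y / m - 1) ≤ p * (y - x) := by
        have hym : y - m = p * (y - x) := by rw [← hm]; ring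
        have h5 : (1 - p) * y * (y / m - 1) = (1 - p) * y * (y - m) / m := by
          field_simp
        rw [h5, hym, div_le_iff₀ hm0]
        have h8 : (1 - p) * y ≤ m := by nlinarith
        have h9 : 0 ≤ p * (y - x) := by nlinarith
        nlinarith [mul_le_mul_of_nonneg_right h8 h9]
      have hexp : m * Real.log m = p * x * Real.log m + (1 - p) * y * Real.log m := by
        rw [← hm]; ring
      have t3' : (1 - p) * y * Real.log y - (1 - p) * y * Real.log m
          ≤ (1 - p) * y * (y / m - 1) := by nlinarith [t3]
      rw [← hD, hexp]
      linarith [t1, t3', t4]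
    rcases le_or_gt D 0 with hDs | hDs
    · have h10 : 0 ≤ D / Real.log p := by
        rw [div_nonneg_iff]; right; exact ⟨hDs, hL0.le⟩
      nlinarith [mul_nonneg hp.le (sub_nonneg.mpr hxy)]
    · have h6 : D / (-Real.log p) ≤ D / 2 :=
        div_le_div_of_nonneg_left hDs.le (by norm_num) (by linarith)
      have h7 : D / Real.log p = -(D / (-Real.log p)) := by
        rw [div_neg, neg_neg]
      rw [h7]
      linarith [h6, hDle]
end

section
/- Let 0 < p ≤ 1/2 and let f : {0,1}^n → {0,1} be a Boolean function. Then p·I^p[f] ≥ μ_p(f)·log_p(μ_p(f)), where μ_p(f) = E_{x∼μ_p}[f(x)] is the p-biased measure of f, I^p[f] = Σ_{i=1}^n Pr_{x∼μ_p}[f(x) ≠ f(x ⊕ e_i)] is the total p-biased influence, and log_p(t) = ln(t)/ln(p) with 0·log_p(0) = 0. -/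
open Finset

/-- The `p`-biased weight of a point of the discrete cube. -/
noncomputable def biasedWeight (p : ℝ) {n : ℕ} (x : Fin n → Bool) : ℝ :=
  ∏ i, if x i then p else 1 - p

/-- The `p`-biased measure (expectation) of a Boolean function. -/
noncomputable def biasedMeasure (p : ℝ) {n : ℕ} (f : (Fin n → Bool) → Bool) : ℝ :=
  ∑ x : Fin n → Bool, biasedWeight p x * (if f x then 1 else 0)

/-- The `p`-biased influence of coordinate `i` on a Boolean function. -/
noncomputable def influence (p : ℝ) {n : ℕ} (f : (Fin n → Bool) → Bool) (i : Fin n) : ℝ :=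
  ∑ x : Fin n → Bool,
    biasedWeight p x * (if f x ≠ f (Function.update x i (!x i)) then 1 else 0)

/-- The total `p`-biased influence of a Boolean function. -/
noncomputable def totalInfluence (p : ℝ) {n : ℕ} (f : (Fin n → Bool) → Bool) : ℝ :=
  ∑ i, influence p f i

lemma biasedWeight_nonneg {p : ℝ} (hp0 : 0 ≤ p) (hp1 : p ≤ 1) {n : ℕ} (x : Fin n → Bool) :
    0 ≤ biasedWeight p x :=
  Finset.prod_nonneg fun i _ => by split <;> linarith

lemma biasedMeasure_nonneg {p : ℝ} (hp0 : 0 ≤ p) (hp1 : p ≤ 1) {n : ℕ}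
    (f : (Fin n → Bool) → Bool) : 0 ≤ biasedMeasure p f :=
  Finset.sum_nonneg fun x _ => mul_nonneg (biasedWeight_nonneg hp0 hp1 x) (by split <;> norm_num)

lemma biasedWeight_cons (p : ℝ) {n : ℕ} (b : Bool) (x : Fin n → Bool) :
    biasedWeight p (Fin.cons b x) = (if b then p else 1-p) * biasedWeight p x := by
  unfold biasedWeight
  rw [Fin.prod_univ_succ]
  simp

lemma sum_cube_succ {n : ℕ} (g : (Fin (n+1) → Bool) → ℝ) :
    ∑ y : Fin (n+1) → Bool, g y
      = ∑ x : Fin n → Bool, (g (Fin.cons false x) + g (Fin.cons true x)) := by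
  rw [← Equiv.sum_comp (Fin.consEquiv (fun _ => Bool)) g, Fintype.sum_prod_type,
    Fintype.sum_bool]
  rw [Finset.sum_add_distrib]
  simp [Fin.consEquiv, add_comm]

lemma measure_split (p : ℝ) {n : ℕ} (f : (Fin (n+1) → Bool) → Bool) :
    biasedMeasure p f = (1-p) * biasedMeasure p (fun x => f (Fin.cons false x))
      + p * biasedMeasure p (fun x => f (Fin.cons true x)) := by
  unfold biasedMeasure
  rw [sum_cube_succ, Finset.mul_sum, Finset.mul_sum, ← Finset.sum_add_distrib]
  refine Finset.sum_congr rfl fun x _ => ?_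
  rw [biasedWeight_cons, biasedWeight_cons]
  simp only [Bool.false_eq_true, if_false, if_true]
  ring

lemma influence_succ (p : ℝ) {n : ℕ} (f : (Fin (n+1) → Bool) → Bool) (i : Fin n) :
    influence p f i.succ = (1-p) * influence p (fun x => f (Fin.cons false x)) i
      + p * influence p (fun x => f (Fin.cons true x)) i := by
  unfold influence
  rw [sum_cube_succ, Finset.mul_sum, Finset.mul_sum, ← Finset.sum_add_distrib]
  refine Finset.sum_congr rfl fun x _ => ?_
  have h1 : ∀ b : Bool, Function.update (Fin.cons b x : Fin (n+1) → Bool) i.succ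
        (!(Fin.cons b x : Fin (n+1) → Bool) i.succ)
      = (Fin.cons b (Function.update x i (!x i)) : Fin (n+1) → Bool) := by
    intro b
    rw [Fin.cons_succ, ← Fin.cons_update (α := fun _ : Fin (n+1) => Bool)]
  rw [h1, h1, biasedWeight_cons, biasedWeight_cons]
  simp only [Bool.false_eq_true, if_false, if_true]
  ring

lemma influence_zero (p : ℝ) {n : ℕ} (f : (Fin (n+1) → Bool) → Bool) :
    influence p f 0 = ∑ x : Fin n → Bool, biasedWeight p x *
      (if f (Fin.cons false x) ≠ f (Fin.cons true x) then 1 else 0) := by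
  unfold influence
  rw [sum_cube_succ]
  refine Finset.sum_congr rfl fun x _ => ?_
  have h0 : ∀ b : Bool, Function.update (Fin.cons b x : Fin (n+1) → Bool) 0
        (!(Fin.cons b x : Fin (n+1) → Bool) 0)
      = (Fin.cons (!b) x : Fin (n+1) → Bool) := by
    intro b
    rw [Fin.cons_zero, Fin.update_cons_zero (α := fun _ : Fin (n+1) => Bool)]
  rw [h0, h0, biasedWeight_cons, biasedWeight_cons]
  by_cases h : f (Fin.cons false x) = f (Fin.cons true x)
  · simp [h]
  · simp [h, Ne.symm h]
    ring

lemma totalInfluence_split (p : ℝ) {n : ℕ} (f : (Fin (n+1) → Bool) → Bool) :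
    totalInfluence p f
      = (∑ x : Fin n → Bool, biasedWeight p x *
          (if f (Fin.cons false x) ≠ f (Fin.cons true x) then 1 else 0))
        + ((1-p) * totalInfluence p (fun x => f (Fin.cons false x))
          + p * totalInfluence p (fun x => f (Fin.cons true x))) := by
  unfold totalInfluence
  rw [Fin.sum_univ_succ, influence_zero]
  congr 1
  rw [Finset.sum_congr rfl (fun i _ => influence_succ p f i), Finset.sum_add_distrib,
    ← Finset.mul_sum, ← Finset.mul_sum]
open Finset

lemma log_chord {x y t : ℝ} (hx : 0 < x) (hy : 0 < y) (ht0 : 0 ≤ t) (ht1 : t ≤ 1) :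
    (1-t) * Real.log x + t * Real.log y ≤ Real.log ((1-t)*x + t*y) := by
  have h := (strictConcaveOn_log_Ioi.concaveOn).2 (Set.mem_Ioi.2 hx)
    (Set.mem_Ioi.2 hy) (by linarith : (0:ℝ) ≤ 1 - t) ht0 (by ring)
  simpa [smul_eq_mul] using h

lemma lemA {p : ℝ} (hp : 0 < p) (hp2 : p ≤ 1/2) :
    p * Real.log p ≤ (1-p) * Real.log (1-p) := by
  have h2 : Real.log 2 ≤ 1 := by
    have := Real.log_le_sub_one_of_pos (by norm_num : (0:ℝ) < 2); linarith
  have htan : Real.log p ≤ 2*p - 1 - Real.log 2 := by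
    have h := Real.log_le_sub_one_of_pos (by linarith : (0:ℝ) < 2*p)
    rw [Real.log_mul (by norm_num) (ne_of_gt hp)] at h
    linarith
  have hchord : -(2*p) * Real.log 2 ≤ Real.log (1-p) := by
    have h := log_chord (x := (1:ℝ)/2) (y := 1) (t := 1 - 2*p)
      (by norm_num) (by norm_num) (by linarith) (by linarith)
    have e1 : (1-(1-2*p))*((1:ℝ)/2) + (1-2*p)*1 = 1 - p := by ring
    rw [e1, Real.log_one, Real.log_div one_ne_zero two_ne_zero, Real.log_one] at h
    linarith
  have hA : p * Real.log p ≤ p * (2*p - 1 - Real.log 2) :=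
    mul_le_mul_of_nonneg_left htan hp.le
  have hB : (1-p) * (-(2*p) * Real.log 2) ≤ (1-p) * Real.log (1-p) :=
    mul_le_mul_of_nonneg_left hchord (by linarith)
  nlinarith [mul_nonneg (mul_nonneg hp.le (by linarith : (0:ℝ) ≤ 1 - 2*p)) (by linarith : (0:ℝ) ≤ 1 - Real.log 2)]

lemma keyIneq {p a b : ℝ} (hp : 0 < p) (hp2 : p ≤ 1/2) (ha : 0 ≤ a) (hb : 0 ≤ b) :
    (1-p)*(a*Real.log a) + p*(b*Real.log b)
      - ((1-p)*a + p*b)*Real.log ((1-p)*a+p*b) ≤ p * |a-b| * (-Real.log p) := by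
  have hp1 : p < 1 := by linarith
  rcases le_total a b with hab | hab
  · -- a ≤ b
    rcases eq_or_lt_of_le hb with hb0 | hb0
    · have ha' : a = 0 := le_antisymm (hab.trans hb0.symm.le) ha
      simp [ha', ← hb0]
    · set μ := (1-p)*a + p*b with hμdef
      have hμpos : 0 < μ := by nlinarith
      have haμ : a ≤ μ := by nlinarith
      have step2 : (1-p)*(a*Real.log a) ≤ (1-p)*(a*Real.log μ) := by
        rcases eq_or_lt_of_le ha with h0 | h0
        · simp [← h0]
        · exact mul_le_mul_of_nonneg_left
            (mul_le_mul_of_nonneg_left (Real.log_le_log h0 haμ) ha) (by linarith)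
      set t := a / b with htdef
      have ht0 : 0 ≤ t := div_nonneg ha hb
      have ht1 : t ≤ 1 := (div_le_one hb0).2 hab
      have hbt : t * b = a := div_mul_cancel₀ a (ne_of_gt hb0)
      have step4 : (1-t) * (Real.log p + Real.log b) + t * Real.log b ≤ Real.log μ := by
        have h := log_chord (x := p*b) (y := b) (t := t) (mul_pos hp hb0) hb0 ht0 ht1
        have e : (1-t)*(p*b) + t*b = μ := by rw [hμdef]; nlinarith [hbt]
        rw [e, Real.log_mul (ne_of_gt hp) (ne_of_gt hb0)] at h
        exact h
      have hmul : b * ((1-t) * (Real.log p + Real.log b) + t * Real.log b) ≤ b * Real.log μ :=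
        mul_le_mul_of_nonneg_left step4 hb
      have hbt' : b * (t * Real.log p) = a * Real.log p := by rw [← hbt]; ring
      have hbt'' : b * (t * Real.log b) = a * Real.log b := by rw [← hbt]; ring
      have hlin : b*Real.log b + (b-a)*Real.log p ≤ b*Real.log μ := by
        nlinarith [hmul, hbt', hbt'']
      have hpkey : p*(b*Real.log b) + p*((b-a)*Real.log p) ≤ p*(b*Real.log μ) := by
        have := mul_le_mul_of_nonneg_left hlin hp.le
        linarith
      have hμexp : μ*Real.log μ = (1-p)*(a*Real.log μ) + p*(b*Real.log μ) := by
        rw [hμdef]; ring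
      rw [abs_of_nonpos (by linarith : a - b ≤ 0)]
      have e3 : p * -(a-b) * -Real.log p = -(p*((b-a)*Real.log p)) := by ring
      rw [e3]
      linarith [step2, hpkey, hμexp]
  · -- b ≤ a
    rcases eq_or_lt_of_le ha with ha0 | ha0
    · have hb' : b = 0 := le_antisymm (hab.trans ha0.symm.le) hb
      simp [hb', ← ha0]
    · set μ := (1-p)*a + p*b with hμdef
      have hμpos : 0 < μ := by nlinarith
      have hbμ : b ≤ μ := by nlinarith
      have step2 : p*(b*Real.log b) ≤ p*(b*Real.log μ) := by
        rcases eq_or_lt_of_le hb with h0 | h0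
        · simp [← h0]
        · exact mul_le_mul_of_nonneg_left
            (mul_le_mul_of_nonneg_left (Real.log_le_log h0 hbμ) hb) hp.le
      set t := b / a with htdef
      have ht0 : 0 ≤ t := div_nonneg hb ha
      have ht1 : t ≤ 1 := (div_le_one ha0).2 hab
      have hat : t * a = b := div_mul_cancel₀ b (ne_of_gt ha0)
      have step4 : (1-t) * (Real.log (1-p) + Real.log a) + t * Real.log a ≤ Real.log μ := by
        have h := log_chord (x := (1-p)*a) (y := a) (t := t)
          (mul_pos (by linarith) ha0) ha0 ht0 ht1
        have e : (1-t)*((1-p)*a) + t*a = μ := by rw [hμdef]; nlinarith [hat]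
        rw [e, Real.log_mul (by linarith : (1:ℝ)-p ≠ 0) (ne_of_gt ha0)] at h
        exact h
      have hmul : a * ((1-t) * (Real.log (1-p) + Real.log a) + t * Real.log a) ≤ a * Real.log μ :=
        mul_le_mul_of_nonneg_left step4 ha
      have hat' : a * (t * Real.log (1-p)) = b * Real.log (1-p) := by rw [← hat]; ring
      have hat'' : a * (t * Real.log a) = b * Real.log a := by rw [← hat]; ring
      have hlin : a*Real.log a + (a-b)*Real.log (1-p) ≤ a*Real.log μ := by
        nlinarith [hmul, hat', hat'']
      have hqkey : (1-p)*(a*Real.log a) + (1-p)*((a-b)*Real.log (1-p)) ≤ (1-p)*(a*Real.log μ) := by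
        have := mul_le_mul_of_nonneg_left hlin (by linarith : (0:ℝ) ≤ 1-p)
        linarith
      have hlemA : (a-b)*(p*Real.log p) ≤ (a-b)*((1-p)*Real.log (1-p)) :=
        mul_le_mul_of_nonneg_left (lemA hp hp2) (by linarith)
      have hμexp : μ*Real.log μ = (1-p)*(a*Real.log μ) + p*(b*Real.log μ) := by
        rw [hμdef]; ring
      rw [abs_of_nonneg (by linarith : 0 ≤ a - b)]
      have e3 : p * (a-b) * -Real.log p = -((a-b)*(p*Real.log p)) := by ring
      rw [e3]
      have e4 : (1-p)*((a-b)*Real.log (1-p)) = (a-b)*((1-p)*Real.log (1-p)) := by ring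
      linarith [step2, hqkey, hμexp, hlemA, e4]
lemma aux_main (p : ℝ) (hp : 0 < p) (hp2 : p ≤ 1/2) :
    ∀ (n : ℕ) (f : (Fin n → Bool) → Bool),
      -(biasedMeasure p f * Real.log (biasedMeasure p f))
        ≤ p * totalInfluence p f * (-Real.log p) := by
  have hp1 : p < 1 := by linarith
  have hc : 0 ≤ -Real.log p := by
    have := Real.log_neg hp hp1; linarith
  intro n
  induction n with
  | zero =>
    intro f
    have hTI : totalInfluence p f = 0 := by simp [totalInfluence]
    have hone : ∀ x : Fin 0 → Bool, biasedWeight p x * (if f x then 1 else 0)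
        = (if f (fun i => i.elim0) then 1 else 0) := by
      intro x
      have hx : x = fun i => i.elim0 := funext fun i => i.elim0
      subst hx
      rw [biasedWeight]
      simp
    have hM : biasedMeasure p f = if f (fun i => i.elim0) then 1 else 0 := by
      rw [biasedMeasure, Finset.sum_congr rfl (fun x _ => hone x), Finset.sum_const]
      simp
    rw [hTI, hM]
    by_cases h : f (fun i => i.elim0) = true <;> simp [h]
  | succ n ih =>
    intro f
    set f0 : (Fin n → Bool) → Bool := fun x => f (Fin.cons false x) with hf0
    set f1 : (Fin n → Bool) → Bool := fun x => f (Fin.cons true x) with hf1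
    set μ0 := biasedMeasure p f0 with hμ0def
    set μ1 := biasedMeasure p f1 with hμ1def
    set D := ∑ x : Fin n → Bool, biasedWeight p x *
      (if f (Fin.cons false x) ≠ f (Fin.cons true x) then 1 else 0) with hDdef
    have hμ0 : 0 ≤ μ0 := biasedMeasure_nonneg hp.le hp1.le f0
    have hμ1 : 0 ≤ μ1 := biasedMeasure_nonneg hp.le hp1.le f1
    have hD : |μ0 - μ1| ≤ D := by
      rw [abs_sub_comm]
      have e : μ1 - μ0 = ∑ x : Fin n → Bool, biasedWeight p x *
          ((if f1 x then 1 else 0) - (if f0 x then 1 else 0)) := by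
        rw [hμ0def, hμ1def, biasedMeasure, biasedMeasure, ← Finset.sum_sub_distrib]
        exact Finset.sum_congr rfl fun x _ => by ring
      rw [e]
      refine (Finset.abs_sum_le_sum_abs _ _).trans (Finset.sum_le_sum fun x _ => ?_)
      rw [abs_mul, abs_of_nonneg (biasedWeight_nonneg hp.le hp1.le x)]
      have hw := biasedWeight_nonneg hp.le hp1.le x
      cases h0 : f0 x <;> cases h1 : f1 x <;>
        simp [hf0, hf1, h0, h1] at * <;> simp [h0, h1]
    have key := keyIneq (a := μ0) (b := μ1) hp hp2 hμ0 hμ1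
    have ih0 := ih f0
    have ih1 := ih f1
    have h1' : (1-p) * (-(μ0 * Real.log μ0))
        ≤ (1-p) * (p * totalInfluence p f0 * (-Real.log p)) :=
      mul_le_mul_of_nonneg_left ih0 (by linarith)
    have h2' : p * (-(μ1 * Real.log μ1))
        ≤ p * (p * totalInfluence p f1 * (-Real.log p)) :=
      mul_le_mul_of_nonneg_left ih1 hp.le
    have hDc : p * |μ0 - μ1| * (-Real.log p) ≤ p * D * (-Real.log p) := by
      have h := mul_le_mul_of_nonneg_left hD hp.le
      exact mul_le_mul_of_nonneg_right h hc
    rw [measure_split p f, totalInfluence_split p f]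
    rw [← hf0, ← hf1, ← hμ0def, ← hμ1def, ← hDdef]
    nlinarith [key, h1', h2', hDc]

theorem biased_edge_isoperimetric_inequality (p : ℝ) (hp : 0 < p) (hp2 : p ≤ 1/2)
    (n : ℕ) (f : (Fin n → Bool) → Bool) :
    p * totalInfluence p f ≥
      biasedMeasure p f * (Real.log (biasedMeasure p f) / Real.log p) := by
  have hp1 : p < 1 := by linarith
  have hlog : Real.log p < 0 := Real.log_neg hp hp1
  have h := aux_main p hp hp2 n f
  rw [ge_iff_le, mul_div_assoc' ,div_le_iff_of_neg hlog]
  nlinarith [h]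
end

section
/- Let 0 < p ≤ 1/2, s, t ∈ ℕ with s ≥ 2, and n ≥ t + s. Define B ⊆ {0,1}^n as the set of x with x_i = 1 for all i ∈ [t], together with the set of x with x_t = 0 and x_i = 1 for all i ∈ [t+s] \ {t}. Then μ_p(B) = p^t·(1 + (1-p)·p^{s-1}) and I^p[B] = p^{t-1}·( t + ((t+s)·(1-p) - 1)·p^{s-1} ). -/
open Finset

lemma sum_prod_bool {n : ℕ} (g : Fin n → Bool → ℝ) :
    ∑ x : Fin n → Bool, ∏ i, g i (x i) = ∏ i, (g i true + g i false) := by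
  rw [← Fintype.piFinset_univ, ← Finset.prod_univ_sum]
  exact Finset.prod_congr rfl fun i _ => by rw [Fintype.sum_bool]

lemma ind_forall {n : ℕ} (Q : Fin n → Prop) [DecidablePred Q] :
    (if ∀ j, Q j then (1:ℝ) else 0) = ∏ j, (if Q j then (1:ℝ) else 0) := by
  by_cases h : ∀ j, Q j
  · rw [if_pos h]
    exact (Finset.prod_eq_one fun j _ => by rw [if_pos (h j)]).symm
  · rw [if_neg h]
    push_neg at h
    obtain ⟨j, hj⟩ := h
    exact (Finset.prod_eq_zero (mem_univ j) (by rw [if_neg hj])).symm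

lemma cube (p : ℝ) {n : ℕ} (P : Fin n → Prop) [DecidablePred P] (σ : Fin n → Bool) :
    ∑ x : Fin n → Bool, biasedWeight p x * (if ∀ j, P j → x j = σ j then 1 else 0)
      = ∏ j ∈ univ.filter P, (if σ j then p else 1 - p) := by
  have : ∀ x : Fin n → Bool, biasedWeight p x * (if ∀ j, P j → x j = σ j then 1 else 0)
      = ∏ j, ((if x j then p else 1 - p) * (if P j → x j = σ j then 1 else 0)) := by
    intro x
    rw [ind_forall (fun j => P j → x j = σ j), biasedWeight, ← Finset.prod_mul_distrib]
  rw [Finset.sum_congr rfl fun x _ => this x,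
    sum_prod_bool (fun j b => (if b then p else 1 - p) * (if (P j → b = σ j) then 1 else 0)),
    Finset.prod_filter]
  refine Finset.prod_congr rfl fun j _ => ?_
  by_cases hP : P j
  · cases hσ : σ j <;> simp [hP, hσ]
  · simp [hP]

lemma ind_or {a b c : Prop} [Decidable a] [Decidable b] [Decidable c]
    (h : c ↔ a ∨ b) (hd : a → b → False) :
    (if c then (1:ℝ) else 0) = (if a then 1 else 0) + (if b then 1 else 0) := by
  by_cases ha : a <;> by_cases hb : b <;> simp [ha, hb, h] <;> tauto

lemma ind_sub {a b c : Prop} [Decidable a] [Decidable b] [Decidable c]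
    (h : c ↔ a ∧ ¬b) (hb : b → a) :
    (if c then (1:ℝ) else 0) = (if a then 1 else 0) - (if b then 1 else 0) := by
  by_cases ha : a <;> by_cases hb' : b <;> simp [ha, hb', h] <;> tauto

lemma card_filter_val {n : ℕ} (Q : ℕ → Prop) [DecidablePred Q] :
    (univ.filter fun j : Fin n => Q j.val).card = ((range n).filter Q).card := by
  rw [Finset.card_filter, Finset.card_filter,
    ← Fin.sum_univ_eq_sum_range (fun k => if Q k then 1 else 0) n]

lemma card_val_lt {n : ℕ} (a : ℕ) (ha : a ≤ n) :
    (univ.filter fun j : Fin n => (j:ℕ) < a).card = a := by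
  rw [card_filter_val (fun k => k < a)]
  have : (range n).filter (fun k => k < a) = range a := by
    ext k; simp [mem_filter, mem_range]; omega
  rw [this, card_range]

lemma card_val_lt_ne {n : ℕ} (a : ℕ) (ha : a ≤ n) (v : ℕ) (hv : v < a) :
    (univ.filter fun j : Fin n => (j:ℕ) < a ∧ (j:ℕ) ≠ v).card = a - 1 := by
  rw [card_filter_val (fun k => k < a ∧ k ≠ v)]
  have : (range n).filter (fun k => k < a ∧ k ≠ v) = (range a).erase v := by
    ext k; simp [mem_filter, mem_range, mem_erase]; omega
  rw [this, Finset.card_erase_of_mem (by simp [mem_range, hv]), card_range]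

lemma prod_one_false (p : ℝ) {n : ℕ} (P : Fin n → Prop) [DecidablePred P] (v : Fin n)
    (hv : P v) :
    ∏ j ∈ univ.filter P, (if (decide ((j:ℕ) ≠ (v:ℕ))) then p else 1 - p)
      = (1 - p) * p ^ ((univ.filter P).card - 1) := by
  have hvmem : v ∈ univ.filter P := by simp [hv]
  rw [← Finset.mul_prod_erase _ _ hvmem]
  have h1 : (if (decide ((v:ℕ) ≠ (v:ℕ))) then p else 1 - p) = 1 - p := by simp
  have h2 : ∏ j ∈ (univ.filter P).erase v, (if (decide ((j:ℕ) ≠ (v:ℕ))) then p else 1 - p)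
      = p ^ ((univ.filter P).card - 1) := by
    rw [Finset.prod_congr rfl (fun j hj => ?_), Finset.prod_const,
      Finset.card_erase_of_mem hvmem]
    have : j ≠ v := (Finset.mem_erase.mp hj).1
    simp [Fin.val_eq_val, this]
  rw [h1, h2]

lemma prod_all_true (p : ℝ) {n : ℕ} (P : Fin n → Prop) [DecidablePred P] :
    ∏ j ∈ univ.filter P, (if ((fun _ : Fin n => true) j) then p else 1 - p)
      = p ^ (univ.filter P).card := by
  simp [Finset.prod_const]

lemma taut1 (G E D xi : Prop) :
    ¬((G ∧ xi) ∧ (E ∨ D) ↔ (G ∧ ¬xi) ∧ (E ∨ D)) ↔ ((G ∧ E) ∨ (G ∧ (¬E ∧ D))) := by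
  tauto

lemma taut2 (C E D : Prop) :
    ¬((C ∧ (E ∨ D)) ↔ (C ∧ (¬E ∨ D))) ↔ (C ∧ ¬(C ∧ D)) := by
  tauto

lemma taut3 (C E G xi : Prop) :
    ¬((C ∧ (E ∨ (G ∧ xi))) ↔ (C ∧ (E ∨ (G ∧ ¬xi)))) ↔ (C ∧ (¬E ∧ G)) := by
  tauto

set_option maxHeartbeats 1000000 in
theorem sharpness_example_B (p : ℝ) (hp : 0 < p) (hp2 : p ≤ 1/2)
    (s t n : ℕ) (hs : 2 ≤ s) (ht : 1 ≤ t) (hn : t + s ≤ n)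
    (f : (Fin n → Bool) → Bool)
    (hf : ∀ x : Fin n → Bool, f x = true ↔
      ((∀ i : Fin n, (i : ℕ) < t → x i = true) ∨
        (x ⟨t - 1, by omega⟩ = false ∧
          ∀ i : Fin n, (i : ℕ) < t + s → (i : ℕ) ≠ t - 1 → x i = true))) :
    biasedMeasure p f = p ^ t * (1 + (1 - p) * p ^ (s - 1)) ∧
    totalInfluence p f =
      p ^ (t - 1) * ((t : ℝ) + (((t : ℝ) + s) * (1 - p) - 1) * p ^ (s - 1)) := by
  obtain ⟨t', rfl⟩ : ∃ t', t = t' + 1 := ⟨t - 1, by omega⟩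
  obtain ⟨s', rfl⟩ : ∃ s', s = s' + 2 := ⟨s - 2, by omega⟩
  set i1 : Fin n := ⟨t', by omega⟩ with hi1
  have hxf : ∀ b : Bool, (b = false) ↔ ¬ (b = true) := by decide
  constructor
  · -- measure
    have point : ∀ x : Fin n → Bool, biasedWeight p x * (if f x then (1:ℝ) else 0)
        = biasedWeight p x *
          ((if (∀ j : Fin n, ((j:ℕ) < t'+1) → x j = true) then 1 else 0)
          + (if (∀ j : Fin n, ((j:ℕ) < t'+s'+3) → x j = decide ((j:ℕ) ≠ t')) then 1 else 0)) := by
      intro x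
      congr 1
      refine ind_or ?_ ?_
      · rw [hf x]
        constructor
        · rintro (h | ⟨h0, h1⟩)
          · exact Or.inl h
          · refine Or.inr fun j hj => ?_
            by_cases hjt : (j:ℕ) = t'
            · have hj1 : j = i1 := Fin.ext hjt
              rw [hj1, decide_eq_false (by simp [hi1, hjt])]
              exact h0
            · rw [decide_eq_true hjt]
              exact h1 j (by omega) (by omega)
        · rintro (h | h)
          · exact Or.inl h
          · refine Or.inr ⟨?_, fun j hj hjt => ?_⟩
            · have := h i1 (by show t' < t'+s'+3; omega)
              rwa [decide_eq_false (by simp [hi1])] at this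
            · have := h j (by omega)
              rwa [decide_eq_true (by omega)] at this
      · intro ha hb
        have h1 := ha i1 (by show t' < t'+1; omega)
        have h2 := hb i1 (by show t' < t'+s'+3; omega)
        rw [h1] at h2
        simp [hi1] at h2
    rw [biasedMeasure, Finset.sum_congr rfl fun x _ => point x]
    have split : ∀ x : Fin n → Bool, biasedWeight p x * ((if (∀ j : Fin n, ((j:ℕ) < t'+1) → x j = true) then (1:ℝ) else 0)
          + (if (∀ j : Fin n, ((j:ℕ) < t'+s'+3) → x j = decide ((j:ℕ) ≠ t')) then 1 else 0))
        = biasedWeight p x * (if (∀ j : Fin n, ((j:ℕ) < t'+1) → x j = ((fun _ : Fin n => true) j)) then (1:ℝ) else 0)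
          + biasedWeight p x * (if (∀ j : Fin n, ((j:ℕ) < t'+s'+3) → x j = ((fun j : Fin n => decide ((j:ℕ) ≠ t')) j)) then 1 else 0) := by
      intro x; ring
    rw [Finset.sum_congr rfl fun x _ => split x, Finset.sum_add_distrib,
      cube p (fun j : Fin n => (j:ℕ) < t'+1) (fun _ => true),
      cube p (fun j : Fin n => (j:ℕ) < t'+s'+3) (fun j => decide ((j:ℕ) ≠ t')),
      prod_all_true, prod_one_false p _ i1 (by show t' < t'+s'+3; omega),
      card_val_lt (t'+1) (by omega), card_val_lt (t'+s'+3) (by omega)]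
    rw [show t'+s'+3-1 = t'+s'+2 from by omega, show s'+2-1 = s'+1 from by omega]
    ring

  · -- total influence
    have hbool : ∀ u v : Bool, (u ≠ v) ↔ ¬(u = true ↔ v = true) := by decide
    have hPhi : ∀ x : Fin n → Bool, f x = true ↔
        ((∀ j : Fin n, (j:ℕ) < t' → x j = true) ∧
          (x i1 = true ∨ ∀ j : Fin n, t'+1 ≤ (j:ℕ) → (j:ℕ) < t'+s'+3 → x j = true)) := by
      intro x
      rw [hf x]
      constructor
      · rintro (h | ⟨h0, h1⟩)
        · exact ⟨fun j hj => h j (by omega),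
            Or.inl (h i1 (by show t' < t'+1; omega))⟩
        · exact ⟨fun j hj => h1 j (by omega) (by omega),
            Or.inr (fun j hj1 hj2 => h1 j (by omega) (by omega))⟩
      · rintro ⟨hC, hE | hD⟩
        · left
          intro j hj
          rcases Nat.lt_or_ge (j:ℕ) t' with h' | h'
          · exact hC j h'
          · have hj1 : j = i1 := Fin.ext (by show (j:ℕ) = t'; omega)
            rw [hj1]; exact hE
        · by_cases hE' : x i1 = true
          · left
            intro j hj
            rcases Nat.lt_or_ge (j:ℕ) t' with h' | h'
            · exact hC j h'
            · have hj1 : j = i1 := Fin.ext (by show (j:ℕ) = t'; omega)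
              rw [hj1]; exact hE'
          · right
            refine ⟨by simpa using hE', fun j hj hjt => ?_⟩
            rcases Nat.lt_or_ge (j:ℕ) t' with h' | h'
            · exact hC j h'
            · exact hD j (by omega) (by omega)
    have hinf : ∀ i : Fin n, influence p f i =
        (if (i:ℕ) < t' then p^t' + (1-p)*p^(t'+s'+1)
          else if (i:ℕ) = t' then p^t' - p^(t'+s'+2)
          else if (i:ℕ) < t'+s'+3 then (1-p)*p^(t'+s'+1) else 0) := by
      intro i
      by_cases h1 : (i:ℕ) < t'
      · rw [if_pos h1]
        have hdiff : ∀ x : Fin n → Bool,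
            (f x ≠ f (Function.update x i (!x i))) ↔
              ((∀ j : Fin n, ((j:ℕ) < t'+1 ∧ (j:ℕ) ≠ (i:ℕ)) → x j = true) ∨
                (∀ j : Fin n, ((j:ℕ) < t'+s'+3 ∧ (j:ℕ) ≠ (i:ℕ)) → x j = decide ((j:ℕ) ≠ t'))) := by
          intro x
          set y := Function.update x i (!x i) with hy
          have hyi : y i = !x i := Function.update_self i (!x i) x
          have hyj : ∀ j : Fin n, j ≠ i → y j = x j := fun j hj => Function.update_of_ne hj _ _
          rw [hbool, hPhi x, hPhi y]
          have hCx : (∀ j : Fin n, (j:ℕ) < t' → x j = true) ↔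
              ((∀ j : Fin n, (j:ℕ) < t' → j ≠ i → x j = true) ∧ x i = true) := by
            constructor
            · intro h; exact ⟨fun j hj _ => h j hj, h i h1⟩
            · rintro ⟨hG, hxi⟩ j hj
              by_cases hji : j = i
              · rw [hji]; exact hxi
              · exact hG j hj hji
          have hCy : (∀ j : Fin n, (j:ℕ) < t' → y j = true) ↔
              ((∀ j : Fin n, (j:ℕ) < t' → j ≠ i → x j = true) ∧ ¬(x i = true)) := by
            constructor
            · intro h
              refine ⟨fun j hj hji => by rw [← hyj j hji]; exact h j hj, fun hxi => ?_⟩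
              have h' := h i h1
              rw [hyi, hxi] at h'
              simp at h'
            · rintro ⟨hG, hxi⟩ j hj
              by_cases hji : j = i
              · have hxf' : x i = false := by simpa using hxi
                rw [hji, hyi, hxf']; rfl
              · rw [hyj j hji]; exact hG j hj hji
          have hEy : y i1 = x i1 := hyj i1 (Fin.ne_of_val_ne (by show t' ≠ (i:ℕ); omega))
          have hDy : (∀ j : Fin n, t'+1 ≤ (j:ℕ) → (j:ℕ) < t'+s'+3 → y j = true) ↔
              (∀ j : Fin n, t'+1 ≤ (j:ℕ) → (j:ℕ) < t'+s'+3 → x j = true) := by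
            refine forall_congr' fun j => ?_
            by_cases hj : t'+1 ≤ (j:ℕ)
            · rw [hyj j (Fin.ne_of_val_ne (by omega))]
            · simp [hj]
          have ha : (∀ j : Fin n, ((j:ℕ) < t'+1 ∧ (j:ℕ) ≠ (i:ℕ)) → x j = true) ↔
              ((∀ j : Fin n, (j:ℕ) < t' → j ≠ i → x j = true) ∧ x i1 = true) := by
            constructor
            · intro h
              exact ⟨fun j hj hji => h j ⟨by omega, fun hv => hji (Fin.ext hv)⟩,
                h i1 ⟨by show t' < t'+1; omega, by show t' ≠ (i:ℕ); omega⟩⟩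
            · rintro ⟨hG, hE⟩ j ⟨hj, hji⟩
              rcases Nat.lt_or_ge (j:ℕ) t' with h' | h'
              · exact hG j h' (Fin.ne_of_val_ne hji)
              · have hj1 : j = i1 := Fin.ext (by show (j:ℕ) = t'; omega)
                rw [hj1]; exact hE
          have hb : (∀ j : Fin n, ((j:ℕ) < t'+s'+3 ∧ (j:ℕ) ≠ (i:ℕ)) → x j = decide ((j:ℕ) ≠ t')) ↔
              ((∀ j : Fin n, (j:ℕ) < t' → j ≠ i → x j = true) ∧ ¬(x i1 = true) ∧
                (∀ j : Fin n, t'+1 ≤ (j:ℕ) → (j:ℕ) < t'+s'+3 → x j = true)) := by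
            constructor
            · intro h
              refine ⟨fun j hj hji => ?_, ?_, fun j hj1 hj2 => ?_⟩
              · have h' := h j ⟨by omega, fun hv => hji (Fin.ext hv)⟩
                rwa [decide_eq_true (show (j:ℕ) ≠ t' by omega)] at h'
              · have h' := h i1 ⟨by show t' < t'+s'+3; omega, by show t' ≠ (i:ℕ); omega⟩
                rw [decide_eq_false (show ¬((i1:ℕ) ≠ t') from fun hh => hh rfl)] at h'
                rw [h']; simp
              · have h' := h j ⟨by omega, by omega⟩
                rwa [decide_eq_true (show (j:ℕ) ≠ t' by omega)] at h'
            · rintro ⟨hG, hE, hD⟩ j ⟨hj, hji⟩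
              by_cases hjt : (j:ℕ) = t'
              · have hj1 : j = i1 := Fin.ext hjt
                rw [hj1, decide_eq_false (show ¬((i1:ℕ) ≠ t') from fun hh => hh rfl)]
                simpa using hE
              · rw [decide_eq_true hjt]
                rcases Nat.lt_or_ge (j:ℕ) t' with h' | h'
                · exact hG j h' (Fin.ne_of_val_ne hji)
                · exact hD j (by omega) (by omega)
          rw [hCx, hCy, hEy, hDy, ha, hb]
          exact taut1 _ _ _ _
        have hd : ∀ x : Fin n → Bool,
            (∀ j : Fin n, ((j:ℕ) < t'+1 ∧ (j:ℕ) ≠ (i:ℕ)) → x j = true) →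
            (∀ j : Fin n, ((j:ℕ) < t'+s'+3 ∧ (j:ℕ) ≠ (i:ℕ)) → x j = decide ((j:ℕ) ≠ t')) → False := by
          intro x hA hB
          have e1 := hA i1 ⟨by show t' < t'+1; omega, by show t' ≠ (i:ℕ); omega⟩
          have e2 := hB i1 ⟨by show t' < t'+s'+3; omega, by show t' ≠ (i:ℕ); omega⟩
          rw [e1, decide_eq_false (show ¬((i1:ℕ) ≠ t') from fun hh => hh rfl)] at e2
          exact Bool.noConfusion e2
        have point : ∀ x : Fin n → Bool,
            biasedWeight p x * (if f x ≠ f (Function.update x i (!x i)) then (1:ℝ) else 0)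
            = biasedWeight p x * (if (∀ j : Fin n, ((j:ℕ) < t'+1 ∧ (j:ℕ) ≠ (i:ℕ)) → x j = ((fun _ : Fin n => true) j)) then 1 else 0)
              + biasedWeight p x * (if (∀ j : Fin n, ((j:ℕ) < t'+s'+3 ∧ (j:ℕ) ≠ (i:ℕ)) → x j = ((fun j : Fin n => decide ((j:ℕ) ≠ t')) j)) then 1 else 0) := by
          intro x
          rw [ind_or (hdiff x) (hd x)]
          ring
        rw [influence, Finset.sum_congr rfl fun x _ => point x, Finset.sum_add_distrib,
          cube p (fun j : Fin n => (j:ℕ) < t'+1 ∧ (j:ℕ) ≠ (i:ℕ)) (fun _ => true),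
          cube p (fun j : Fin n => (j:ℕ) < t'+s'+3 ∧ (j:ℕ) ≠ (i:ℕ)) (fun j => decide ((j:ℕ) ≠ t')),
          prod_all_true,
          prod_one_false p _ i1 ⟨by show t' < t'+s'+3; omega, by show t' ≠ (i:ℕ); omega⟩,
          card_val_lt_ne (t'+1) (by omega) (i:ℕ) (by omega),
          card_val_lt_ne (t'+s'+3) (by omega) (i:ℕ) (by omega),
          show t'+1-1 = t' from rfl, show t'+s'+3-1-1 = t'+s'+1 from by omega]
      · by_cases h2 : (i:ℕ) = t'
        · rw [if_neg h1, if_pos h2]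
          have hI : i = i1 := Fin.ext (by show (i:ℕ) = t'; omega)
          have hdiff : ∀ x : Fin n → Bool,
              (f x ≠ f (Function.update x i (!x i))) ↔
                ((∀ j : Fin n, (j:ℕ) < t' → x j = true) ∧
                  ¬(∀ j : Fin n, ((j:ℕ) < t'+s'+3 ∧ (j:ℕ) ≠ t') → x j = true)) := by
            intro x
            set y := Function.update x i (!x i) with hy
            have hyi : y i = !x i := Function.update_self i (!x i) x
            have hyj : ∀ j : Fin n, j ≠ i → y j = x j := fun j hj => Function.update_of_ne hj _ _
            rw [hbool, hPhi x, hPhi y]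
            have hCy : (∀ j : Fin n, (j:ℕ) < t' → y j = true) ↔
                (∀ j : Fin n, (j:ℕ) < t' → x j = true) := by
              refine forall_congr' fun j => ?_
              by_cases hj : (j:ℕ) < t'
              · rw [hyj j (Fin.ne_of_val_ne (by omega))]
              · simp [hj]
            have hEy : y i1 = !x i1 := by rw [← hI]; exact hyi
            have hDy : (∀ j : Fin n, t'+1 ≤ (j:ℕ) → (j:ℕ) < t'+s'+3 → y j = true) ↔
                (∀ j : Fin n, t'+1 ≤ (j:ℕ) → (j:ℕ) < t'+s'+3 → x j = true) := by
              refine forall_congr' fun j => ?_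
              by_cases hj : t'+1 ≤ (j:ℕ)
              · rw [hyj j (Fin.ne_of_val_ne (by omega))]
              · simp [hj]
            have hnot : ((!(x i1)) = true) ↔ ¬(x i1 = true) := by cases x i1 <;> simp
            have hbiff : (∀ j : Fin n, ((j:ℕ) < t'+s'+3 ∧ (j:ℕ) ≠ t') → x j = true) ↔
                ((∀ j : Fin n, (j:ℕ) < t' → x j = true) ∧
                  (∀ j : Fin n, t'+1 ≤ (j:ℕ) → (j:ℕ) < t'+s'+3 → x j = true)) := by
              constructor
              · intro h
                exact ⟨fun j hj => h j ⟨by omega, by omega⟩,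
                  fun j hj1 hj2 => h j ⟨by omega, by omega⟩⟩
              · rintro ⟨hC, hD⟩ j ⟨hj, hjt⟩
                rcases Nat.lt_or_ge (j:ℕ) t' with h' | h'
                · exact hC j h'
                · exact hD j (by omega) (by omega)
            rw [hCy, hEy, hDy, hnot, hbiff]
            exact taut2 _ _ _
          have hsub : ∀ x : Fin n → Bool,
              (∀ j : Fin n, ((j:ℕ) < t'+s'+3 ∧ (j:ℕ) ≠ t') → x j = true) →
              (∀ j : Fin n, (j:ℕ) < t' → x j = true) :=
            fun x h j hj => h j ⟨by omega, by omega⟩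
          have point : ∀ x : Fin n → Bool,
              biasedWeight p x * (if f x ≠ f (Function.update x i (!x i)) then (1:ℝ) else 0)
              = biasedWeight p x * (if (∀ j : Fin n, ((j:ℕ) < t') → x j = ((fun _ : Fin n => true) j)) then 1 else 0)
                - biasedWeight p x * (if (∀ j : Fin n, ((j:ℕ) < t'+s'+3 ∧ (j:ℕ) ≠ t') → x j = ((fun _ : Fin n => true) j)) then 1 else 0) := by
            intro x
            rw [ind_sub (hdiff x) (hsub x)]
            ring
          rw [influence, Finset.sum_congr rfl fun x _ => point x, Finset.sum_sub_distrib,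
            cube p (fun j : Fin n => (j:ℕ) < t') (fun _ => true),
            cube p (fun j : Fin n => (j:ℕ) < t'+s'+3 ∧ (j:ℕ) ≠ t') (fun _ => true),
            prod_all_true, prod_all_true,
            card_val_lt t' (by omega),
            card_val_lt_ne (t'+s'+3) (by omega) t' (by omega),
            show t'+s'+3-1 = t'+s'+2 from by omega]
        · by_cases h3 : (i:ℕ) < t'+s'+3
          · rw [if_neg h1, if_neg h2, if_pos h3]
            have h4 : t'+1 ≤ (i:ℕ) := by omega
            have hdiff : ∀ x : Fin n → Bool,
                (f x ≠ f (Function.update x i (!x i))) ↔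
                  (∀ j : Fin n, ((j:ℕ) < t'+s'+3 ∧ (j:ℕ) ≠ (i:ℕ)) → x j = decide ((j:ℕ) ≠ t')) := by
              intro x
              set y := Function.update x i (!x i) with hy
              have hyi : y i = !x i := Function.update_self i (!x i) x
              have hyj : ∀ j : Fin n, j ≠ i → y j = x j := fun j hj => Function.update_of_ne hj _ _
              rw [hbool, hPhi x, hPhi y]
              have hCy : (∀ j : Fin n, (j:ℕ) < t' → y j = true) ↔
                  (∀ j : Fin n, (j:ℕ) < t' → x j = true) := by
                refine forall_congr' fun j => ?_
                by_cases hj : (j:ℕ) < t'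
                · rw [hyj j (Fin.ne_of_val_ne (by omega))]
                · simp [hj]
              have hEy : y i1 = x i1 := hyj i1 (Fin.ne_of_val_ne (by show t' ≠ (i:ℕ); omega))
              have hDx : (∀ j : Fin n, t'+1 ≤ (j:ℕ) → (j:ℕ) < t'+s'+3 → x j = true) ↔
                  ((∀ j : Fin n, t'+1 ≤ (j:ℕ) → (j:ℕ) < t'+s'+3 → j ≠ i → x j = true) ∧ x i = true) := by
                constructor
                · intro h; exact ⟨fun j hj1 hj2 _ => h j hj1 hj2, h i h4 h3⟩
                · rintro ⟨hG, hxi⟩ j hj1 hj2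
                  by_cases hji : j = i
                  · rw [hji]; exact hxi
                  · exact hG j hj1 hj2 hji
              have hDy : (∀ j : Fin n, t'+1 ≤ (j:ℕ) → (j:ℕ) < t'+s'+3 → y j = true) ↔
                  ((∀ j : Fin n, t'+1 ≤ (j:ℕ) → (j:ℕ) < t'+s'+3 → j ≠ i → x j = true) ∧ ¬(x i = true)) := by
                constructor
                · intro h
                  refine ⟨fun j hj1 hj2 hji => by rw [← hyj j hji]; exact h j hj1 hj2, fun hxi => ?_⟩
                  have h' := h i h4 h3
                  rw [hyi, hxi] at h'
                  simp at h'
                · rintro ⟨hG, hxi⟩ j hj1 hj2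
                  by_cases hji : j = i
                  · have hxf' : x i = false := by simpa using hxi
                    rw [hji, hyi, hxf']; rfl
                  · rw [hyj j hji]; exact hG j hj1 hj2 hji
              have hc : (∀ j : Fin n, ((j:ℕ) < t'+s'+3 ∧ (j:ℕ) ≠ (i:ℕ)) → x j = decide ((j:ℕ) ≠ t')) ↔
                  ((∀ j : Fin n, (j:ℕ) < t' → x j = true) ∧ ¬(x i1 = true) ∧
                    (∀ j : Fin n, t'+1 ≤ (j:ℕ) → (j:ℕ) < t'+s'+3 → j ≠ i → x j = true)) := by
                constructor
                · intro h
                  refine ⟨fun j hj => ?_, ?_, fun j hj1 hj2 hji => ?_⟩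
                  · have h' := h j ⟨by omega, by omega⟩
                    rwa [decide_eq_true (show (j:ℕ) ≠ t' by omega)] at h'
                  · have h' := h i1 ⟨by show t' < t'+s'+3; omega, by show t' ≠ (i:ℕ); omega⟩
                    rw [decide_eq_false (show ¬((i1:ℕ) ≠ t') from fun hh => hh rfl)] at h'
                    rw [h']; simp
                  · have h' := h j ⟨by omega, fun hv => hji (Fin.ext hv)⟩
                    rwa [decide_eq_true (show (j:ℕ) ≠ t' by omega)] at h'
                · rintro ⟨hC, hE, hG⟩ j ⟨hj, hji⟩
                  by_cases hjt : (j:ℕ) = t'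
                  · have hj1 : j = i1 := Fin.ext hjt
                    rw [hj1, decide_eq_false (show ¬((i1:ℕ) ≠ t') from fun hh => hh rfl)]
                    simpa using hE
                  · rw [decide_eq_true hjt]
                    rcases Nat.lt_or_ge (j:ℕ) t' with h' | h'
                    · exact hC j h'
                    · exact hG j (by omega) (by omega) (Fin.ne_of_val_ne hji)
              rw [hCy, hEy, hDx, hDy, hc]
              exact taut3 _ _ _ _
            have point : ∀ x : Fin n → Bool,
                biasedWeight p x * (if f x ≠ f (Function.update x i (!x i)) then (1:ℝ) else 0)
                = biasedWeight p x * (if (∀ j : Fin n, ((j:ℕ) < t'+s'+3 ∧ (j:ℕ) ≠ (i:ℕ)) → x j = ((fun j : Fin n => decide ((j:ℕ) ≠ t')) j)) then 1 else 0) := by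
              intro x
              congr 1
              exact if_congr (hdiff x) rfl rfl
            rw [influence, Finset.sum_congr rfl fun x _ => point x,
              cube p (fun j : Fin n => (j:ℕ) < t'+s'+3 ∧ (j:ℕ) ≠ (i:ℕ)) (fun j => decide ((j:ℕ) ≠ t')),
              prod_one_false p _ i1 ⟨by show t' < t'+s'+3; omega, by show t' ≠ (i:ℕ); omega⟩,
              card_val_lt_ne (t'+s'+3) (by omega) (i:ℕ) (by omega),
              show t'+s'+3-1-1 = t'+s'+1 from by omega]
          · rw [if_neg h1, if_neg h2, if_neg h3]
            have hfix : ∀ x : Fin n → Bool, f (Function.update x i (!x i)) = f x := by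
              intro x
              set y := Function.update x i (!x i) with hy
              have hyj : ∀ j : Fin n, j ≠ i → y j = x j := fun j hj => Function.update_of_ne hj _ _
              have hiff : f y = true ↔ f x = true := by
                rw [hPhi x, hPhi y]
                have hCy : (∀ j : Fin n, (j:ℕ) < t' → y j = true) ↔
                    (∀ j : Fin n, (j:ℕ) < t' → x j = true) := by
                  refine forall_congr' fun j => ?_
                  by_cases hj : (j:ℕ) < t'
                  · rw [hyj j (Fin.ne_of_val_ne (by omega))]
                  · simp [hj]
                have hEy : y i1 = x i1 := hyj i1 (Fin.ne_of_val_ne (by show t' ≠ (i:ℕ); omega))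
                have hDy : (∀ j : Fin n, t'+1 ≤ (j:ℕ) → (j:ℕ) < t'+s'+3 → y j = true) ↔
                    (∀ j : Fin n, t'+1 ≤ (j:ℕ) → (j:ℕ) < t'+s'+3 → x j = true) := by
                  refine forall_congr' fun j => ?_
                  by_cases hj : (j:ℕ) < t'+s'+3
                  · rw [hyj j (Fin.ne_of_val_ne (by omega))]
                  · simp [hj]
                rw [hCy, hEy, hDy]
              cases hu : f y <;> cases hv : f x
              · rfl
              · rw [hu, hv] at hiff; simpa using hiff.mpr rfl
              · rw [hu, hv] at hiff; simpa using hiff.mp rfl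
              · rfl
            have point : ∀ x : Fin n → Bool,
                biasedWeight p x * (if f x ≠ f (Function.update x i (!x i)) then (1:ℝ) else 0) = 0 := by
              intro x
              rw [hfix x, if_neg (by simp)]
              ring
            rw [influence, Finset.sum_congr rfl fun x _ => point x, Finset.sum_const, smul_zero]
    calc totalInfluence p f
        = ∑ i : Fin n, influence p f i := rfl
      _ = ∑ i : Fin n, (if (i:ℕ) < t' then p^t' + (1-p)*p^(t'+s'+1)
            else if (i:ℕ) = t' then p^t' - p^(t'+s'+2)
            else if (i:ℕ) < t'+s'+3 then (1-p)*p^(t'+s'+1) else 0) :=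
          Finset.sum_congr rfl fun i _ => hinf i
      _ = ∑ k ∈ range n, (if k < t' then p^t' + (1-p)*p^(t'+s'+1)
            else if k = t' then p^t' - p^(t'+s'+2)
            else if k < t'+s'+3 then (1-p)*p^(t'+s'+1) else 0) :=
          Fin.sum_univ_eq_sum_range (fun k => if k < t' then p^t' + (1-p)*p^(t'+s'+1)
            else if k = t' then p^t' - p^(t'+s'+2)
            else if k < t'+s'+3 then (1-p)*p^(t'+s'+1) else 0) n
      _ = ∑ k ∈ range (t'+s'+3), (if k < t' then p^t' + (1-p)*p^(t'+s'+1)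
            else if k = t' then p^t' - p^(t'+s'+2)
            else if k < t'+s'+3 then (1-p)*p^(t'+s'+1) else 0) := by
          refine (Finset.sum_subset (Finset.range_subset_range.mpr (by omega)) ?_).symm
          intro k hk hk2
          simp only [mem_range] at hk hk2
          rw [if_neg (by omega), if_neg (by omega), if_neg (by omega)]
      _ = ∑ k ∈ Ico 0 t', (if k < t' then p^t' + (1-p)*p^(t'+s'+1)
            else if k = t' then p^t' - p^(t'+s'+2)
            else if k < t'+s'+3 then (1-p)*p^(t'+s'+1) else 0)
          + (∑ k ∈ Ico t' (t'+1), (if k < t' then p^t' + (1-p)*p^(t'+s'+1)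
            else if k = t' then p^t' - p^(t'+s'+2)
            else if k < t'+s'+3 then (1-p)*p^(t'+s'+1) else 0)
          + ∑ k ∈ Ico (t'+1) (t'+s'+3), (if k < t' then p^t' + (1-p)*p^(t'+s'+1)
            else if k = t' then p^t' - p^(t'+s'+2)
            else if k < t'+s'+3 then (1-p)*p^(t'+s'+1) else 0)) := by
          rw [Finset.sum_Ico_consecutive _ (by omega : t' ≤ t'+1) (by omega : t'+1 ≤ t'+s'+3),
            Finset.sum_Ico_consecutive _ (by omega : 0 ≤ t') (by omega : t' ≤ t'+s'+3),
            Finset.range_eq_Ico]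
      _ = (t' : ℝ) * (p^t' + (1-p)*p^(t'+s'+1))
          + ((p^t' - p^(t'+s'+2)) + ((s':ℝ)+2) * ((1-p)*p^(t'+s'+1))) := by
          have hA : ∑ k ∈ Ico 0 t', (if k < t' then p^t' + (1-p)*p^(t'+s'+1)
              else if k = t' then p^t' - p^(t'+s'+2)
              else if k < t'+s'+3 then (1-p)*p^(t'+s'+1) else 0)
              = (t' : ℝ) * (p^t' + (1-p)*p^(t'+s'+1)) := by
            rw [Finset.sum_congr rfl (fun k hk => if_pos (mem_Ico.mp hk).2),
              Finset.sum_const, Nat.card_Ico, Nat.sub_zero, nsmul_eq_mul]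
          have hB : ∑ k ∈ Ico t' (t'+1), (if k < t' then p^t' + (1-p)*p^(t'+s'+1)
              else if k = t' then p^t' - p^(t'+s'+2)
              else if k < t'+s'+3 then (1-p)*p^(t'+s'+1) else 0)
              = p^t' - p^(t'+s'+2) := by
            rw [Nat.Ico_succ_singleton, Finset.sum_singleton,
              if_neg (by omega), if_pos rfl]
          have hC : ∑ k ∈ Ico (t'+1) (t'+s'+3), (if k < t' then p^t' + (1-p)*p^(t'+s'+1)
              else if k = t' then p^t' - p^(t'+s'+2)
              else if k < t'+s'+3 then (1-p)*p^(t'+s'+1) else 0)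
              = ((s':ℝ)+2) * ((1-p)*p^(t'+s'+1)) := by
            have hval : ∀ k ∈ Ico (t'+1) (t'+s'+3), (if k < t' then p^t' + (1-p)*p^(t'+s'+1)
                else if k = t' then p^t' - p^(t'+s'+2)
                else if k < t'+s'+3 then (1-p)*p^(t'+s'+1) else 0) = (1-p)*p^(t'+s'+1) := by
              intro k hk
              have hk' := mem_Ico.mp hk
              rw [if_neg (by omega), if_neg (by omega), if_pos (by omega)]
            rw [Finset.sum_congr rfl hval, Finset.sum_const, Nat.card_Ico,
              show t'+s'+3-(t'+1) = s'+2 from by omega, nsmul_eq_mul]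
            push_cast
            ring
          rw [hA, hB, hC]
      _ = p ^ (t'+1-1) * (((t'+1 : ℕ) : ℝ) + ((((t'+1:ℕ) : ℝ) + ((s'+2:ℕ):ℝ)) * (1 - p) - 1) * p ^ (s'+2-1)) := by
          rw [show t'+1-1 = t' from rfl, show s'+2-1 = s'+1 from rfl]
          push_cast
          ring
end
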